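/- (Erdős–Szekeres upper bound.) For every n ≥ 3, every finite set of at least C(2n−4, n−2) + 1 points in the plane in general position contains n points in convex position, where C(a,b) denotes the binomial coefficient. -/

import Mathlib

/-!
After a shear all x-coordinates are distinct. If `P` has more than `C(a + b, a)` points, it
contains an `(a + 2)`-cup or a `(b + 2)`-cap: by induction at most `C(a + b - 1, a - 1)` points
of `P` do not end an `(a + 2)`-cup, so by induction again the endpoints contain a `(b + 2)`-cap.
Its first point ends an `(a + 2)`-cup, and comparing slopes where the two meet, the cup or the
cap extends by one point. In general position every triple of a cup turns counterclockwise and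
every triple of a cap clockwise, so an `n`-cup or `n`-cap is a convex `n`-gon; take
`a = b = n - 2`.
-/

/-- A finite set of points in the plane is in general position if no three of
its points are collinear. -/
def GeneralPosition (P : Finset (ℝ × ℝ)) : Prop :=
  ∀ p ∈ P, ∀ q ∈ P, ∀ r ∈ P, p ≠ q → p ≠ r → q ≠ r →
    ¬ Collinear ℝ ({p, q, r} : Set (ℝ × ℝ))

/-- A finite set of points is in convex position if no point of the set lies in
the convex hull of the other points. -/
def ConvexPosition (S : Finset (ℝ × ℝ)) : Prop :=
  ∀ p ∈ S, p ∉ convexHull ℝ ((S : Set (ℝ × ℝ)) \ {p})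

/-- The ptSlope of the line through two points (with distinct x-coordinates). -/
noncomputable def ptSlope (p q : ℝ × ℝ) : ℝ := (q.2 - p.2) / (q.1 - p.1)

/-- The points of `P` have pairwise distinct x-coordinates. -/
def DistinctX (P : Finset (ℝ × ℝ)) : Prop :=
  ∀ p ∈ P, ∀ q ∈ P, p ≠ q → p.1 ≠ q.1

/-- A `t`-cup in `P`: a sequence `q 0, …, q (t-1)` of points of `P` with strictly
increasing x-coordinates and non-decreasing slopes of consecutive segments. -/
def IsGCup (P : Finset (ℝ × ℝ)) (t : ℕ) (q : ℕ → ℝ × ℝ) : Prop :=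
  (∀ i, i < t → q i ∈ P) ∧
  (∀ i, i + 1 < t → (q i).1 < (q (i + 1)).1) ∧
  (∀ i, i + 2 < t → ptSlope (q i) (q (i + 1)) ≤ ptSlope (q (i + 1)) (q (i + 2)))

/-- A `t`-cap in `P`: a sequence of points of `P` with strictly increasing
x-coordinates and non-increasing slopes of consecutive segments. -/
def IsGCap (P : Finset (ℝ × ℝ)) (t : ℕ) (q : ℕ → ℝ × ℝ) : Prop :=
  (∀ i, i < t → q i ∈ P) ∧
  (∀ i, i + 1 < t → (q i).1 < (q (i + 1)).1) ∧
  (∀ i, i + 2 < t → ptSlope (q (i + 1)) (q (i + 2)) ≤ ptSlope (q i) (q (i + 1)))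

open Finset

/-- Twice the signed area of the triangle `u v w`; positive iff `u v w` turn counterclockwise. -/
def orient (u v w : ℝ × ℝ) : ℝ := (v.1 - u.1) * (w.2 - u.2) - (w.1 - u.1) * (v.2 - u.2)

lemma orient_rotate (u v w : ℝ × ℝ) : orient u v w = orient v w u := by unfold orient; ring

lemma orient_swap (u v w : ℝ × ℝ) : orient u v w = -orient u w v := by unfold orient; ring

lemma orient_eq_mul_ptSlope_sub {u v w : ℝ × ℝ} (huv : u.1 ≠ v.1) (hvw : v.1 ≠ w.1) :
    orient u v w = (v.1 - u.1) * (w.1 - v.1) * (ptSlope v w - ptSlope u v) := by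
  unfold orient ptSlope
  field_simp [sub_ne_zero.2 huv.symm, sub_ne_zero.2 hvw.symm]
  ring

lemma collinear_of_orient_eq_zero {u v w : ℝ × ℝ} (huv : u.1 ≠ v.1) (h : orient u v w = 0) :
    Collinear ℝ ({u, v, w} : Set (ℝ × ℝ)) := by
  have hw : AffineMap.lineMap u v ((w.1 - u.1) / (v.1 - u.1)) = w := by
    have : v.1 - u.1 ≠ 0 := sub_ne_zero.2 huv.symm
    unfold orient at h
    ext <;> simp [AffineMap.lineMap_apply_module'] <;> field_simp <;> linarith
  rw [← hw]
  exact collinear_triple_of_mem_affineSpan_pair (left_mem_affineSpan_pair ℝ u v)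
    (right_mem_affineSpan_pair ℝ u v) (AffineMap.lineMap_mem_affineSpan_pair _ u v)

lemma orient_pos_of_four {a b c d : ℝ × ℝ} (hab : a.1 < b.1) (hbc : b.1 < c.1) (hcd : c.1 < d.1)
    (habc : 0 < orient a b c) (hbcd : 0 < orient b c d) :
    0 < orient a b d ∧ 0 < orient a c d := by
  -- Grassmann–Plücker relations for the lifted points `(1, x, y)`, weighted by x-coordinates
  have h₁ : orient a b d * (c.1 - b.1) =
      orient a b c * (d.1 - b.1) + orient b c d * (b.1 - a.1) := by
    unfold orient; ring
  have h₂ : orient a c d * (c.1 - b.1) =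
      orient a b c * (d.1 - c.1) + orient b c d * (c.1 - a.1) := by
    unfold orient; ring
  constructor
  · refine pos_of_mul_pos_left ?_ (sub_pos.2 hbc).le
    rw [h₁]; have := sub_pos.2 hab; have := sub_pos.2 (hbc.trans hcd); positivity
  · refine pos_of_mul_pos_left ?_ (sub_pos.2 hbc).le
    rw [h₂]; have := sub_pos.2 hcd; have := sub_pos.2 (hab.trans hbc); positivity

lemma convex_setOf_orient_nonneg (u w : ℝ × ℝ) : Convex ℝ {z | 0 ≤ orient u w z} := by
  intro x hx y hy a b ha hb hab
  have : orient u w (a • x + b • y) = a * orient u w x + b * orient u w y := by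
    simp only [orient, Prod.fst_add, Prod.snd_add, Prod.smul_fst, Prod.smul_snd, smul_eq_mul]
    linear_combination (u.2 * (w.1 - u.1) - u.1 * (w.2 - u.2)) * hab
  simp only [Set.mem_ofPred_eq] at hx hy ⊢
  rw [this]
  positivity

lemma GeneralPosition.image (e : (ℝ × ℝ) ≃ₗ[ℝ] (ℝ × ℝ)) {P : Finset (ℝ × ℝ)}
    (h : GeneralPosition P) : GeneralPosition (P.image e) := by
  simp only [GeneralPosition, mem_image, forall_exists_index, and_imp, forall_apply_eq_imp_iff₂]
  intro a ha b hb c hc hab hac hbc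
  have := (affineIndependent_iff_not_collinear_set.2 (h a ha b hb c hc (ne_of_apply_ne e hab)
    (ne_of_apply_ne e hac) (ne_of_apply_ne e hbc))).map' e.toLinearMap.toAffineMap e.injective
  rw [← affineIndependent_iff_not_collinear_set]
  convert this using 1
  -- the `AddTorsor` instances on `ℝ × ℝ` from `Prod` and from `AddGroup` agree only up to defeq
  · rfl
  · ext i : 1; fin_cases i <;> rfl

lemma GeneralPosition.orient_ne_zero {P : Finset (ℝ × ℝ)} (h : GeneralPosition P)
    {u v w : ℝ × ℝ} (hu : u ∈ P) (hv : v ∈ P) (hw : w ∈ P) (huv : u.1 < v.1) (hvw : v.1 < w.1) :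
    orient u v w ≠ 0 := fun h0 =>
  h u hu v hv w hw (ne_of_apply_ne Prod.fst huv.ne) (ne_of_apply_ne Prod.fst (huv.trans hvw).ne)
    (ne_of_apply_ne Prod.fst hvw.ne) (collinear_of_orient_eq_zero huv.ne h0)

lemma orient_pos_of_consecutive {n : ℕ} {q : ℕ → ℝ × ℝ}
    (hx : StrictMonoOn (fun i => (q i).1) (Set.Iio n))
    (h : ∀ i, i + 2 < n → 0 < orient (q i) (q (i + 1)) (q (i + 2))) :
    ∀ i j k, i < j → j < k → k < n → 0 < orient (q i) (q j) (q k) := by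
  have hx' : ∀ i j, i < j → j < n → (q i).1 < (q j).1 := fun i j hij hj =>
    hx (show i < n by omega) hj hij
  suffices ∀ d i j k, i < j → j < k → k < n → k ≤ i + d → 0 < orient (q i) (q j) (q k) from
    fun i j k hij hjk hk => this k i j k hij hjk hk (by omega)
  intro d
  induction d with
  | zero => omega
  | succ d ih =>
    intro i j k hij hjk hk hd
    obtain ⟨rfl, rfl⟩ | hj | hk' : (j = i + 1 ∧ k = i + 2) ∨ i + 1 < j ∨ j + 1 < k := by omega
    · exact h i hk
    · exact (orient_pos_of_four (hx' i (i + 1) (by omega) (by omega)) (hx' (i + 1) j hj (by omega))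
        (hx' j k hjk hk) (ih i (i + 1) j (by omega) hj (by omega) (by omega))
        (ih (i + 1) j k hj hjk hk (by omega))).2
    · exact (orient_pos_of_four (hx' i j hij (by omega)) (hx' j (k - 1) (by omega) (by omega))
        (hx' (k - 1) k (by omega) hk) (ih i j (k - 1) hij (by omega) (by omega) (by omega))
        (ih j (k - 1) k (by omega) (by omega) hk (by omega))).1

lemma convexPosition_image_range {n : ℕ} {q : ℕ → ℝ × ℝ}
    (hx : StrictMonoOn (fun i => (q i).1) (Set.Iio n))
    (ho : ∀ i j k, i < j → j < k → k < n → 0 < orient (q i) (q j) (q k)) :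
    ConvexPosition ((range n).image q) := by
  simp only [ConvexPosition, mem_image, mem_range, forall_exists_index, and_imp,
    forall_apply_eq_imp_iff₂]
  intro i hi
  suffices ∃ C : Set (ℝ × ℝ), Convex ℝ C ∧ q i ∉ C ∧ ∀ j < n, j ≠ i → q j ∈ C by
    obtain ⟨C, hC, hiC, hjC⟩ := this
    refine fun h => hiC (convexHull_min ?_ hC h)
    rintro _ ⟨hz, hne⟩
    obtain ⟨j, hj, rfl⟩ : ∃ j < n, q j = _ := by simpa using hz
    exact hjC j hj (by rintro rfl; exact hne rfl)
  have hx' : ∀ i j, i < j → j < n → (q i).1 < (q j).1 := fun i j hij hj =>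
    hx (show i < n by omega) hj hij
  obtain rfl | hi₀ := Nat.eq_zero_or_pos i
  · refine ⟨{z | (q 0).1 < z.1}, convex_halfSpace_gt (LinearMap.fst ℝ ℝ ℝ).isLinear _,
      lt_irrefl (q 0).1, fun j hj hj₀ => hx' 0 j (by omega) hj⟩
  obtain hlast | hi₁ := eq_or_lt_of_le (Nat.succ_le_of_lt hi)
  · refine ⟨{z | z.1 < (q i).1}, convex_halfSpace_lt (LinearMap.fst ℝ ℝ ℝ).isLinear _,
      lt_irrefl (q i).1, fun j hj hji => hx' j i (by omega) hi⟩
  -- `q i` is strictly on one side of the line through its neighbours, all other points on the other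
  refine ⟨{z | 0 ≤ orient (q (i - 1)) (q (i + 1)) z}, ?_, ?_, fun j hj hji => ?_⟩
  · exact convex_setOf_orient_nonneg _ _
  · have := ho (i - 1) i (i + 1) (by omega) (by omega) hi₁
    rw [orient_swap] at this
    simpa using this
  · obtain hj' | rfl | rfl | hj' : j < i - 1 ∨ j = i - 1 ∨ j = i + 1 ∨ i + 1 < j := by omega
    · have := ho j (i - 1) (i + 1) hj' (by omega) hi₁
      rw [orient_rotate] at this
      exact this.le
    · simp [orient]
    · simp [orient]
    · exact (ho (i - 1) (i + 1) j (by omega) hj' hj).le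

lemma IsGCup.strictMonoOn_fst {P : Finset (ℝ × ℝ)} {t : ℕ} {q : ℕ → ℝ × ℝ} (h : IsGCup P t q) :
    StrictMonoOn (fun i => (q i).1) (Set.Iio t) :=
  strictMonoOn_of_lt_succ Set.ordConnected_Iio fun i _ _ hi => h.2.1 i hi

lemma IsGCup.orient_pos {P : Finset (ℝ × ℝ)} (hgp : GeneralPosition P) {t : ℕ}
    {q : ℕ → ℝ × ℝ} (h : IsGCup P t q) {i : ℕ} (hi : i + 2 < t) :
    0 < orient (q i) (q (i + 1)) (q (i + 2)) := by
  obtain ⟨hmem, hx, hslope⟩ := h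
  have h₁ := hx i (by omega)
  have h₂ := hx (i + 1) hi
  refine lt_of_le_of_ne ?_ (hgp.orient_ne_zero (hmem i (by omega)) (hmem (i + 1) (by omega))
    (hmem (i + 2) hi) h₁ h₂).symm
  rw [orient_eq_mul_ptSlope_sub h₁.ne h₂.ne]
  have := sub_nonneg.2 (hslope i hi)
  have := sub_pos.2 h₁
  have := sub_pos.2 h₂
  positivity

lemma IsGCup.exists_convexPosition {P : Finset (ℝ × ℝ)} (hgp : GeneralPosition P) {n : ℕ}
    {q : ℕ → ℝ × ℝ} (h : IsGCup P n q) : ∃ S ⊆ P, S.card = n ∧ ConvexPosition S := by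
  have hx := h.strictMonoOn_fst
  refine ⟨(range n).image q, ?_, ?_, convexPosition_image_range hx
    (orient_pos_of_consecutive hx fun i hi => h.orient_pos hgp hi)⟩
  · simpa [image_subset_iff] using h.1
  · rw [card_image_of_injOn, card_range]
    intro i hi j hj hij
    exact hx.injOn (by simpa using hi) (by simpa using hj) (congrArg Prod.fst hij)

lemma ConvexPosition.image (e : (ℝ × ℝ) ≃ₗ[ℝ] (ℝ × ℝ)) {S : Finset (ℝ × ℝ)}
    (h : ConvexPosition S) : ConvexPosition (S.image e) := by
  simp only [ConvexPosition, mem_image, forall_exists_index, and_imp, forall_apply_eq_imp_iff₂]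
  intro p hp hmem
  rw [coe_image, ← Set.image_singleton, ← Set.image_sdiff e.injective, ← LinearEquiv.coe_coe,
    ← LinearMap.image_convexHull] at hmem
  obtain ⟨x, hx, hxp⟩ := hmem
  exact h p hp (e.injective hxp ▸ hx)

lemma exists_convexPosition_of_image (e : (ℝ × ℝ) ≃ₗ[ℝ] (ℝ × ℝ)) {P : Finset (ℝ × ℝ)} {n : ℕ}
    (h : ∃ S ⊆ P.image e, S.card = n ∧ ConvexPosition S) :
    ∃ S ⊆ P, S.card = n ∧ ConvexPosition S := by
  obtain ⟨S, hSP, hcard, hS⟩ := h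
  refine ⟨S.image e.symm, ?_, by rw [card_image_of_injective _ e.symm.injective, hcard],
    hS.image e.symm⟩
  intro z hz
  obtain ⟨y, hy, rfl⟩ := mem_image.1 hz
  obtain ⟨x, hx, rfl⟩ := mem_image.1 (hSP hy)
  simpa using hx

def reflectY : (ℝ × ℝ) ≃ₗ[ℝ] (ℝ × ℝ) := (LinearEquiv.refl ℝ ℝ).prodCongr (LinearEquiv.neg ℝ)

@[simp] lemma reflectY_apply (z : ℝ × ℝ) : reflectY z = (z.1, -z.2) := rfl

lemma ptSlope_reflectY (p q : ℝ × ℝ) : ptSlope (reflectY p) (reflectY q) = -ptSlope p q := by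
  simp only [ptSlope, reflectY_apply]
  ring

lemma IsGCap.isGCup_image_reflectY {P : Finset (ℝ × ℝ)} {t : ℕ} {q : ℕ → ℝ × ℝ}
    (h : IsGCap P t q) : IsGCup (P.image reflectY) t (reflectY ∘ q) := by
  obtain ⟨hmem, hx, hslope⟩ := h
  refine ⟨fun i hi => mem_image_of_mem _ (hmem i hi), hx, fun i hi => ?_⟩
  simp only [Function.comp_apply, ptSlope_reflectY]
  exact neg_le_neg (hslope i hi)

lemma IsGCap.exists_convexPosition {P : Finset (ℝ × ℝ)} (hgp : GeneralPosition P) {n : ℕ}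
    {q : ℕ → ℝ × ℝ} (h : IsGCap P n q) : ∃ S ⊆ P, S.card = n ∧ ConvexPosition S :=
  exists_convexPosition_of_image reflectY
    (h.isGCup_image_reflectY.exists_convexPosition (hgp.image reflectY))

lemma DistinctX.mono {P Q : Finset (ℝ × ℝ)} (hQP : Q ⊆ P) (h : DistinctX P) : DistinctX Q :=
  fun p hp q hq => h p (hQP hp) q (hQP hq)

lemma IsGCup.mono {P Q : Finset (ℝ × ℝ)} (hPQ : P ⊆ Q) {t : ℕ} {q : ℕ → ℝ × ℝ}
    (h : IsGCup P t q) : IsGCup Q t q :=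
  ⟨fun i hi => hPQ (h.1 i hi), h.2⟩

lemma IsGCap.mono {P Q : Finset (ℝ × ℝ)} (hPQ : P ⊆ Q) {t : ℕ} {q : ℕ → ℝ × ℝ}
    (h : IsGCap P t q) : IsGCap Q t q :=
  ⟨fun i hi => hPQ (h.1 i hi), h.2⟩

lemma IsGCup.snoc {P : Finset (ℝ × ℝ)} {t : ℕ} {u : ℕ → ℝ × ℝ} (h : IsGCup P (t + 2) u)
    {r : ℝ × ℝ} (hr : r ∈ P) (hx : (u (t + 1)).1 < r.1)
    (hs : ptSlope (u t) (u (t + 1)) ≤ ptSlope (u (t + 1)) r) :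
    IsGCup P (t + 3) (Function.update u (t + 2) r) := by
  obtain ⟨hmem, hxs, hslope⟩ := h
  refine ⟨fun i hi => ?_, fun i hi => ?_, fun i hi => ?_⟩
  · obtain hi | rfl : i < t + 2 ∨ i = t + 2 := by omega
    · simpa [Function.update_of_ne hi.ne] using hmem i hi
    · simpa
  · obtain hi | rfl : i + 1 < t + 2 ∨ i = t + 1 := by omega
    · simpa [Function.update_of_ne hi.ne, Function.update_of_ne (show i ≠ t + 2 by omega)]
        using hxs i hi
    · simpa using hx
  · obtain hi | rfl : i + 2 < t + 2 ∨ i = t := by omega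
    · simpa [Function.update_of_ne hi.ne, Function.update_of_ne (show i ≠ t + 2 by omega),
        Function.update_of_ne (show i + 1 ≠ t + 2 by omega)] using hslope i hi
    · simpa using hs

lemma IsGCap.cons {P : Finset (ℝ × ℝ)} {t : ℕ} {c : ℕ → ℝ × ℝ} (h : IsGCap P t c)
    {p : ℝ × ℝ} (hp : p ∈ P) (hx : p.1 < (c 0).1) (hs : ptSlope (c 0) (c 1) ≤ ptSlope p (c 0)) :
    IsGCap P (t + 1) (fun | 0 => p | i + 1 => c i) := by
  obtain ⟨hmem, hxs, hslope⟩ := h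
  refine ⟨fun i hi => ?_, fun i hi => ?_, fun i hi => ?_⟩ <;> rcases i with _ | i
  exacts [hp, hmem i (by omega), hx, hxs i (by omega), hs, hslope i (by omega)]

lemma exists_isGCup_two_and_isGCap_two {P : Finset (ℝ × ℝ)} (hdx : DistinctX P)
    (hP : 1 < P.card) : ∃ q, IsGCup P 2 q ∧ IsGCap P 2 q := by
  obtain ⟨a, ha, b, hb, hab⟩ := one_lt_card.1 hP
  wlog hlt : a.1 < b.1 generalizing a b
  · exact this b hb a ha hab.symm ((hdx a ha b hb hab).symm.lt_of_le (not_lt.1 hlt))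
  let q : ℕ → ℝ × ℝ := fun | 0 => a | _ => b
  have hmem : ∀ i, i < 2 → q i ∈ P := by rintro (_ | _) _ <;> assumption
  have hx : ∀ i, i + 1 < 2 → (q i).1 < (q (i + 1)).1 := by
    intro i hi
    obtain rfl : i = 0 := by omega
    exact hlt
  exact ⟨q, ⟨hmem, hx, fun i hi => by omega⟩, ⟨hmem, hx, fun i hi => by omega⟩⟩

theorem exists_isGCup_or_isGCap (a b : ℕ) {P : Finset (ℝ × ℝ)} (hdx : DistinctX P)
    (hP : (a + b).choose a < P.card) :
    (∃ q, IsGCup P (a + 2) q) ∨ ∃ q, IsGCap P (b + 2) q := by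
  induction a generalizing b P with
  | zero =>
    exact .inl ((exists_isGCup_two_and_isGCap_two hdx (by simpa using hP)).imp fun _ => And.left)
  | succ a iha =>
  induction b generalizing P with
  | zero =>
    exact .inr ((exists_isGCup_two_and_isGCap_two hdx (by simpa using hP)).imp fun _ => And.right)
  | succ b ihb =>
  by_contra! h
  obtain ⟨hcup, hcap⟩ := h
  classical
  set E := P.filter fun p => ∃ u, IsGCup P (a + 2) u ∧ u (a + 1) = p
  set F := P.filter fun p => ¬∃ u, IsGCup P (a + 2) u ∧ u (a + 1) = p
  have hFP : F ⊆ P := filter_subset _ _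
  have hEP : E ⊆ P := filter_subset _ _
  have hF : F.card ≤ (a + (b + 1)).choose a := by
    by_contra! hF
    obtain ⟨u, hu⟩ | ⟨c, hc⟩ := iha (b + 1) (hdx.mono hFP) hF
    · exact (mem_filter.1 (hu.1 (a + 1) (by omega))).2 ⟨u, hu.mono hFP, rfl⟩
    · exact hcap c (hc.mono hFP)
  have hE : (a + 1 + b).choose (a + 1) < E.card := by
    have hpascal := Nat.choose_succ_succ' (a + 1 + b) a
    rw [show a + 1 + b + 1 = a + 1 + (b + 1) by omega] at hpascal
    rw [show a + (b + 1) = a + 1 + b by omega] at hF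
    have hsplit : E.card + F.card = P.card := card_filter_add_card_filter_not _
    omega
  obtain ⟨u, hu⟩ | ⟨c, hc⟩ := ihb (hdx.mono hEP) hE
  · exact hcup u (hu.mono hEP)
  obtain ⟨-, u, hu, hu₀⟩ := mem_filter.1 (hc.1 0 (by omega))
  rcases le_total (ptSlope (u a) (u (a + 1))) (ptSlope (c 0) (c 1)) with h | h
  · exact hcup _ (hu.snoc (hEP (hc.1 1 (by omega))) (hu₀ ▸ hc.2.1 0 (by omega)) (hu₀ ▸ h))
  · exact hcap _ ((hc.mono hEP).cons (hu.1 a (by omega)) (hu₀ ▸ hu.2.1 a (by omega)) (hu₀ ▸ h))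

lemma exists_linearEquiv_distinctX (P : Finset (ℝ × ℝ)) :
    ∃ e : (ℝ × ℝ) ≃ₗ[ℝ] ℝ × ℝ, DistinctX (P.image e) := by
  classical
  obtain ⟨c, hc⟩ := Infinite.exists_notMem_finset
    ((P ×ˢ P).image fun pq => (pq.1.2 - pq.2.2) / (pq.2.1 - pq.1.1))
  -- the shear `(x, y) ↦ (y + c x, x)`, with `c` avoiding every slope `(p.2 - q.2) / (q.1 - p.1)`
  refine ⟨((LinearEquiv.refl ℝ ℝ).skewProd (LinearEquiv.refl ℝ ℝ) (c • LinearMap.id)).trans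
    (LinearEquiv.prodComm ℝ ℝ ℝ), ?_⟩
  simp only [DistinctX, mem_image, forall_exists_index, and_imp, forall_apply_eq_imp_iff₂]
  intro p hp q hq hpq heq
  simp only [LinearEquiv.trans_apply, LinearEquiv.skewProd_apply, LinearEquiv.prodComm_apply,
    LinearEquiv.refl_apply, LinearMap.smul_apply, LinearMap.id_apply, smul_eq_mul,
    Prod.fst_swap] at heq
  by_cases h₁ : p.1 = q.1
  · exact hpq (congrArg _ (Prod.ext h₁ (by rw [h₁] at heq; linarith)))
  · refine hc (mem_image.2 ⟨(q, p), mem_product.2 ⟨hq, hp⟩, ?_⟩)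
    field_simp [sub_ne_zero.2 h₁]
    linarith

/-- Erdős–Szekeres upper bound: every set of at least `C(2n-4, n-2) + 1` points
in general position contains `n` points in convex position. -/
theorem erdos_szekeres_upper_bound (n : ℕ) (hn : 3 ≤ n)
    (P : Finset (ℝ × ℝ)) (hgp : GeneralPosition P)
    (hcard : (2 * n - 4).choose (n - 2) + 1 ≤ P.card) :
    ∃ S ⊆ P, S.card = n ∧ ConvexPosition S := by
  obtain ⟨e, he⟩ := exists_linearEquiv_distinctX P
  refine exists_convexPosition_of_image e ?_
  have hgp' := hgp.image e
  have hcard' : (n - 2 + (n - 2)).choose (n - 2) < (P.image e).card := by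
    rw [card_image_of_injective _ e.injective, show n - 2 + (n - 2) = 2 * n - 4 by omega]
    omega
  rw [← show n - 2 + 2 = n by omega]
  obtain ⟨q, hq⟩ | ⟨q, hq⟩ := exists_isGCup_or_isGCap (n - 2) (n - 2) he hcard'
  · exact hq.exists_convexPosition hgp'
  · exact hq.exists_convexPosition hgp'
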